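/- If n > 50400 is a highly composite number with largest prime factor p_r, and d(n) = 2^{β_1} q_2^{β_2} ⋯ q_s^{β_s} is the prime factorization of d(n), then β_1 ≥ π(p_r + 1) − π((p_r+1)/2), where π is the prime counting function. -/

import Mathlib

/-!
Every prime `q` with `(p_r + 1) / 2 < q ≤ p_r` occurs in `n` with exponent exactly `1`, hence
contributes a factor `2` to `d n = ∏ (v_p(n) + 1)`. Everything rests on one exchange principle:
replacing the part of `n` supported on a finite set of primes by a smaller number built from those
primes and from primes not dividing `n` must lose divisors. Exchanges show that every prime
`≤ p_r` divides `n` and, against a Bertrand prime `p ∈ (p_r, 2 p_r]`, that `v_q(n) ≤ 2`. If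
`v_q(n) = 2`, the trades `2² q ↦ p`, `q ↦ 2⁴`, `3 q ↦ P` (a prime in `(p_r, 3q)`), `q ↦ 3` and
`q ↦ 6` force `v_2(n) ≤ 6`, `q ≤ 16`, `v_3(n) = 2` and `q ≤ 5`; for `q ≤ 5` one more exchange
leaves only `n ≤ 50400`.
-/

/-- `d n`: number of positive divisors of `n`. -/
def d (n : ℕ) : ℕ := (Nat.divisors n).card

/-- A positive integer `n` is highly composite if every smaller positive
integer has strictly fewer divisors. -/
def HighlyComposite (n : ℕ) : Prop :=
  0 < n ∧ ∀ m : ℕ, 0 < m → m < n → d m < d n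

lemma d_mul {a b : ℕ} (h : a.Coprime b) : d (a * b) = d a * d b :=
  Nat.Coprime.card_divisors_mul h

lemma d_prime_pow {p : ℕ} (hp : p.Prime) (k : ℕ) : d (p ^ k) = k + 1 := by
  rw [d, Nat.divisors_prime_pow hp, Finset.card_map, Finset.card_range]

lemma coprime_prod_pow_of_disjoint {s t : Finset ℕ} (hs : ∀ p ∈ s, p.Prime)
    (ht : ∀ p ∈ t, p.Prime) (hst : Disjoint s t) (e f : ℕ → ℕ) :
    (∏ p ∈ s, p ^ e p).Coprime (∏ p ∈ t, p ^ f p) :=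
  Nat.Coprime.prod_left fun p hp => Nat.Coprime.prod_right fun q hq =>
    ((Nat.coprime_primes (hs p hp) (ht q hq)).2
      fun h => Finset.disjoint_left.1 hst hp (h ▸ hq)).pow _ _

lemma d_prod_pow {s : Finset ℕ} (hs : ∀ p ∈ s, p.Prime) (e : ℕ → ℕ) :
    d (∏ p ∈ s, p ^ e p) = ∏ p ∈ s, (e p + 1) := by
  induction s using Finset.induction_on with
  | empty => simp [d]
  | insert p s hps ih =>
    have hp := hs p (Finset.mem_insert_self p s)
    have hs' : ∀ q ∈ s, q.Prime := fun q hq => hs q (Finset.mem_insert_of_mem hq)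
    have hcop : (p ^ e p).Coprime (∏ q ∈ s, q ^ e q) := Nat.Coprime.prod_right fun q hq =>
      ((Nat.coprime_primes hp (hs' q hq)).2 (ne_of_mem_of_not_mem hq hps).symm).pow _ _
    rw [Finset.prod_insert hps, Finset.prod_insert hps, d_mul hcop, d_prime_pow hp, ih hs']

lemma prod_pow_factorization_eq_self_of_subset {n : ℕ} (hn : n ≠ 0) {s : Finset ℕ}
    (hs : n.primeFactors ⊆ s) : ∏ p ∈ s, p ^ n.factorization p = n := by
  conv_rhs => rw [← Nat.prod_factorization_pow_eq_self hn]
  exact (Finsupp.prod_of_support_subset _ (by simpa using hs) _ fun _ _ => pow_zero _).symm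

namespace HighlyComposite

variable {n : ℕ}

theorem prod_pow_le_of_prod_succ_le (hn : HighlyComposite n) {s : Finset ℕ}
    (hs : ∀ p ∈ s, p.Prime) (g : ℕ → ℕ)
    (hd : ∏ p ∈ s, (n.factorization p + 1) ≤ ∏ p ∈ s, (g p + 1)) :
    ∏ p ∈ s, p ^ n.factorization p ≤ ∏ p ∈ s, p ^ g p := by
  set P := ∏ p ∈ s, p ^ n.factorization p
  set A := ∏ p ∈ s, p ^ g p
  set t := n.primeFactors \ s
  set c := ∏ p ∈ t, p ^ n.factorization p
  have ht : ∀ p ∈ t, p.Prime := fun p hp => Nat.prime_of_mem_primeFactors (Finset.sdiff_subset hp)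
  have hst : Disjoint s t := Finset.disjoint_sdiff
  have hsplit : P * c = n := by
    rw [← Finset.prod_union hst]
    exact prod_pow_factorization_eq_self_of_subset hn.1.ne' (by simp [t])
  have hc : 0 < c := Finset.prod_pos fun p hp => pow_pos (ht p hp).pos _
  have hA : 0 < A := Finset.prod_pos fun p hp => pow_pos (hs p hp).pos _
  by_contra! hlt
  have hdlt : d (A * c) < d (P * c) := by
    rw [hsplit]
    exact hn.2 _ (Nat.mul_pos hA hc) (hsplit ▸ Nat.mul_lt_mul_of_pos_right hlt hc)
  rw [d_mul (coprime_prod_pow_of_disjoint hs ht hst _ _),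
    d_mul (coprime_prod_pow_of_disjoint hs ht hst _ _), d_prod_pow hs, d_prod_pow hs] at hdlt
  exact (Nat.lt_of_mul_lt_mul_right hdlt).not_ge hd

theorem pow_mul_pow_le (hn : HighlyComposite n) {p q : ℕ} (hp : p.Prime) (hq : q.Prime)
    (hpq : p ≠ q) {a b : ℕ}
    (hd : (n.factorization p + 1) * (n.factorization q + 1) ≤ (a + 1) * (b + 1)) :
    p ^ n.factorization p * q ^ n.factorization q ≤ p ^ a * q ^ b := by
  have h := hn.prod_pow_le_of_prod_succ_le (s := {p, q}) (by simp [hp, hq])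
    (fun x => if x = p then a else b) (by simpa [Finset.prod_pair hpq, hpq.symm] using hd)
  simpa [Finset.prod_pair hpq, hpq.symm] using h

theorem pow_mul_pow_mul_pow_le (hn : HighlyComposite n) {p q r : ℕ} (hp : p.Prime)
    (hq : q.Prime) (hr : r.Prime) (hpq : p ≠ q) (hpr : p ≠ r) (hqr : q ≠ r) {a b c : ℕ}
    (hd : (n.factorization p + 1) * (n.factorization q + 1) * (n.factorization r + 1) ≤
      (a + 1) * (b + 1) * (c + 1)) :
    p ^ n.factorization p * q ^ n.factorization q * r ^ n.factorization r ≤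
      p ^ a * q ^ b * r ^ c := by
  have h := hn.prod_pow_le_of_prod_succ_le (s := {p, q, r}) (by simp [hp, hq, hr])
    (fun x => if x = p then a else if x = q then b else c)
    (by simpa [Finset.prod_insert, hpq, hpr, hqr, hpq.symm, hpr.symm, hqr.symm, mul_assoc]
      using hd)
  simpa [Finset.prod_insert, hpq, hpr, hqr, hpq.symm, hpr.symm, hqr.symm, mul_assoc] using h

theorem pow_le_of_not_dvd (hn : HighlyComposite n) {p q : ℕ} (hq : q.Prime) (hp : p.Prime)
    (hpn : ¬ p ∣ n) {k : ℕ} (hk : k ≤ n.factorization q)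
    (hd : n.factorization q + 1 ≤ 2 * (n.factorization q - k + 1)) : q ^ k ≤ p := by
  have hvp : n.factorization p = 0 := Nat.factorization_eq_zero_of_not_dvd hpn
  rcases eq_or_ne q p with rfl | hqp
  · simp [Nat.le_zero.1 (hvp ▸ hk), hq.one_le]
  have h := hn.pow_mul_pow_le hq hp hqp (a := n.factorization q - k) (b := 1) (by rw [hvp]; omega)
  rw [hvp, pow_zero, mul_one, pow_one, ← Nat.sub_add_cancel hk, pow_add, Nat.add_sub_cancel] at h
  exact Nat.le_of_mul_le_mul_left h (pow_pos hq.pos _)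

theorem le_pow_of_factorization_eq_two (hn : HighlyComposite n) {b q : ℕ} (hb : b.Prime)
    (hq : q.Prime) (hbq : b ≠ q) (hq2 : n.factorization q = 2) {t : ℕ}
    (hd : 3 * (n.factorization b + 1) ≤ 2 * (n.factorization b + t + 1)) : q ≤ b ^ t := by
  have h := hn.pow_mul_pow_le hb hq hbq (a := n.factorization b + t) (b := 1)
    (by rw [hq2]; omega)
  rw [hq2, pow_add] at h
  refine Nat.le_of_mul_le_mul_left (c := b ^ n.factorization b * q) ?_
    (Nat.mul_pos (pow_pos hb.pos _) hq.pos)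
  calc b ^ n.factorization b * q * q = b ^ n.factorization b * q ^ 2 := by ring
    _ ≤ b ^ n.factorization b * b ^ t * q ^ 1 := h
    _ = b ^ n.factorization b * q * b ^ t := by ring

theorem pow_mul_le_of_factorization_eq_two (hn : HighlyComposite n) {b q p : ℕ} (hb : b.Prime)
    (hq : q.Prime) (hp : p.Prime) (hbq : b ≠ q) (hpb : p ≠ b) (hpn : ¬ p ∣ n)
    (hq2 : n.factorization q = 2) {k : ℕ} (hk : k ≤ n.factorization b)
    (hd : 3 * (n.factorization b + 1) ≤ 4 * (n.factorization b - k + 1)) : b ^ k * q ≤ p := by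
  have hvp : n.factorization p = 0 := Nat.factorization_eq_zero_of_not_dvd hpn
  have hqp : q ≠ p := fun h => by simp [h, hvp] at hq2
  have h := hn.pow_mul_pow_mul_pow_le hb hq hp hbq hpb.symm hqp
    (a := n.factorization b - k) (b := 1) (c := 1) (by rw [hq2, hvp]; omega)
  rw [hq2, hvp, ← Nat.sub_add_cancel hk, pow_add, Nat.add_sub_cancel] at h
  refine Nat.le_of_mul_le_mul_left (c := b ^ (n.factorization b - k) * q) ?_
    (Nat.mul_pos (pow_pos hb.pos _) hq.pos)
  calc b ^ (n.factorization b - k) * q * (b ^ k * q)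
      = b ^ (n.factorization b - k) * b ^ k * q ^ 2 * p ^ 0 := by ring
    _ ≤ b ^ (n.factorization b - k) * q ^ 1 * p ^ 1 := h
    _ = b ^ (n.factorization b - k) * q * p := by ring

theorem le_six_of_factorization_eq_two (hn : HighlyComposite n) {q : ℕ} (hq : q.Prime)
    (hq2 : q ≠ 2) (hq3 : q ≠ 3) (hqv : n.factorization q = 2)
    (hd : 3 * (n.factorization 2 + 1) * (n.factorization 3 + 1) ≤
      2 * (n.factorization 2 + 2) * (n.factorization 3 + 2)) : q ≤ 6 := by
  have h := hn.pow_mul_pow_mul_pow_le Nat.prime_two Nat.prime_three hq (by norm_num)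
    hq2.symm hq3.symm (a := n.factorization 2 + 1) (b := n.factorization 3 + 1) (c := 1)
    (by rw [hqv]; linarith)
  rw [hqv] at h
  refine Nat.le_of_mul_le_mul_left (c := 2 ^ n.factorization 2 * 3 ^ n.factorization 3 * q) ?_
    (Nat.mul_pos (by positivity) hq.pos)
  calc 2 ^ n.factorization 2 * 3 ^ n.factorization 3 * q * q
      = 2 ^ n.factorization 2 * 3 ^ n.factorization 3 * q ^ 2 := by ring
    _ ≤ 2 ^ (n.factorization 2 + 1) * 3 ^ (n.factorization 3 + 1) * q ^ 1 := h
    _ = 2 ^ n.factorization 2 * 3 ^ n.factorization 3 * q * 6 := by ring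

theorem dvd_of_le (hn : HighlyComposite n) {pr q : ℕ} (hpr : pr.Prime) (hprn : pr ∣ n)
    (hq : q.Prime) (hle : q ≤ pr) : q ∣ n := by
  by_contra hqn
  have hv := hpr.factorization_pos_of_dvd hn.1.ne' hprn
  have h := hn.pow_le_of_not_dvd hpr hq hqn (k := 1) hv (by omega)
  rw [pow_one] at h
  exact hqn (le_antisymm hle h ▸ hprn)

theorem factorization_le_two (hn : HighlyComposite n) {p q : ℕ} (hq : q.Prime) (hp : p.Prime)
    (hpn : ¬ p ∣ n) (hpq : p < q ^ 2) : n.factorization q ≤ 2 := by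
  by_contra! h
  exact (hn.pow_le_of_not_dvd hq hp hpn (k := 2) h.le (by omega)).not_gt hpq

theorem le_of_factorization_five_eq_two (hn : HighlyComposite n)
    (hpf : n.primeFactors ⊆ {2, 3, 5, 7}) (h2 : n.factorization 2 ≤ 6)
    (h3 : n.factorization 3 = 2) (h5 : n.factorization 5 = 2) : n ≤ 50400 := by
  have h11n : ¬ 11 ∣ n := fun h => by
    simpa using hpf (Nat.mem_primeFactors.2 ⟨by norm_num, h, hn.1.ne'⟩)
  have h11 : n.factorization 11 = 0 := Nat.factorization_eq_zero_of_not_dvd h11n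
  have h2_ge : 4 ≤ n.factorization 2 := by
    by_contra!
    have := hn.le_pow_of_factorization_eq_two Nat.prime_two (q := 5) (by norm_num) (by norm_num)
      h5 (t := 2) (by omega)
    norm_num at this
  have h2_ne : n.factorization 2 ≠ 6 := by
    intro h6
    -- `2⁶ 3² 5² ↦ 2³ 3³ 5 · 11`: `14400 > 11880`, while `7 · 3 · 3 ≤ 4 · 4 · 2 · 2`
    have := hn.prod_pow_le_of_prod_succ_le (s := {2, 3, 5, 11}) (by norm_num)
      (fun p => if p ≤ 3 then 3 else 1) (by simp [Finset.prod_insert, h6, h3, h5, h11])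
    simp [Finset.prod_insert, h6, h3, h5, h11] at this
  have h7 : n.factorization 7 ≤ 1 := by
    have h7_le : n.factorization 7 ≤ 2 :=
      hn.factorization_le_two (p := 11) (by norm_num) (by norm_num)
        h11n (by norm_num)
    have h7_ne : n.factorization 7 ≠ 2 := fun h => by
      have := hn.le_six_of_factorization_eq_two (q := 7) (by norm_num) (by norm_num)
        (by norm_num) h (by rw [h3]; omega)
      omega
    omega
  calc n = 2 ^ n.factorization 2 * (3 ^ 2 * (5 ^ 2 * 7 ^ n.factorization 7)) := by
        conv_lhs => rw [← prod_pow_factorization_eq_self_of_subset hn.1.ne' hpf]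
        simp [Finset.prod_insert, h3, h5]
    _ ≤ 2 ^ 5 * (3 ^ 2 * (5 ^ 2 * 7 ^ 1)) := by gcongr <;> omega
    _ = 50400 := by norm_num

theorem factorization_two_le_six (hn : HighlyComposite n) {pr q : ℕ} (hpr : pr.Prime)
    (hmax : ∀ r : ℕ, r.Prime → r ∣ n → r ≤ pr) (hq : q.Prime) (hhalf : pr + 1 < 2 * q)
    (hq2 : n.factorization q = 2) : n.factorization 2 ≤ 6 := by
  by_contra! h
  obtain ⟨p, hp, hprp, hp2pr⟩ := Nat.exists_prime_lt_and_le_two_mul pr hpr.ne_zero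
  have := hn.pow_mul_le_of_factorization_eq_two Nat.prime_two hq hp (by rintro rfl; omega)
    (by have := hpr.two_le; omega) (fun h => (hmax p hp h).not_gt hprp) hq2 (k := 2) (by omega)
    (by omega)
  omega

theorem factorization_three_eq_two (hn : HighlyComposite n) {pr q : ℕ}
    (hmax : ∀ r : ℕ, r.Prime → r ∣ n → r ≤ pr) (hq : q.Prime) (hhalf : pr + 1 < 2 * q)
    (hle : q ≤ pr) (hq5 : 5 ≤ q) (hq16 : q ≤ 16) (hq2 : n.factorization q = 2) : n.factorization 3 = 2 := by
  have h3_le : n.factorization 3 ≤ 2 := by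
    by_contra! h3
    -- `3^v₃ q² ↦ 3^(v₃-1) q P`, with `P` below a prime in `(2q - 2, 3q) ⊆ (p_r, 3q)`
    have key : ∀ P, P.Prime → pr < P → P < 3 * q → False := fun P hP hprP hPq => by
      have := hn.pow_mul_le_of_factorization_eq_two Nat.prime_three hq hP (by omega) (by omega)
        (fun h => (hmax P hP h).not_gt hprP) hq2 (k := 1) (by omega) (by omega)
      omega
    interval_cases q <;> norm_num at hq
    exacts [key 11 (by norm_num) (by omega) (by norm_num), key 13 (by norm_num) (by omega)
      (by norm_num), key 23 (by norm_num) (by omega) (by norm_num),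
      key 29 (by norm_num) (by omega) (by norm_num)]
  by_contra
  have := hn.le_pow_of_factorization_eq_two Nat.prime_three hq (by omega) hq2 (t := 1)
    (by omega)
  omega

theorem factorization_ne_two (hn : HighlyComposite n) (hbig : 50400 < n) {pr q : ℕ}
    (hpr : pr.Prime) (hmax : ∀ r : ℕ, r.Prime → r ∣ n → r ≤ pr) (hq : q.Prime)
    (hhalf : pr + 1 < 2 * q) (hle : q ≤ pr) : n.factorization q ≠ 2 := by
  intro hq2
  have hpf : ∀ m, pr ≤ m → n.primeFactors ⊆ Nat.primesLE m := fun m hm r hr =>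
    Nat.mem_primesLE.2 ⟨(hmax r (Nat.prime_of_mem_primeFactors hr)
      (Nat.dvd_of_mem_primeFactors hr)).trans hm, Nat.prime_of_mem_primeFactors hr⟩
  have h2 := hn.factorization_two_le_six hpr hmax hq hhalf hq2
  have hq5 : 5 ≤ q := by
    by_contra! hq5
    have hq3 : q ≤ 3 := by interval_cases q <;> first | omega | norm_num at hq
    have h3 : n.factorization 3 ≤ 2 := hn.factorization_le_two Nat.prime_three (p := 5)
      (by norm_num) (fun h => by have := hmax 5 (by norm_num) h; omega) (by norm_num)
    have hsub : n.primeFactors ⊆ {2, 3} := (hpf 4 (by omega)).trans (by decide)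
    have hsmall : n = 2 ^ n.factorization 2 * 3 ^ n.factorization 3 :=
      (prod_pow_factorization_eq_self_of_subset hn.1.ne' hsub).symm.trans
        (Finset.prod_pair (by norm_num))
    have : 2 ^ n.factorization 2 * 3 ^ n.factorization 3 ≤ 2 ^ 6 * 3 ^ 2 := by gcongr <;> omega
    omega
  have hq16 : q ≤ 16 := by
    simpa using hn.le_pow_of_factorization_eq_two Nat.prime_two hq (by omega) hq2 (t := 4)
      (by omega)
  have h3 := hn.factorization_three_eq_two hmax hq hhalf hle hq5 hq16 hq2
  by_cases hq7 : 7 ≤ q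
  · have := hn.le_six_of_factorization_eq_two hq (by omega) (by omega) hq2 (by rw [h3]; omega)
    omega
  obtain rfl : q = 5 := by interval_cases q <;> first | rfl | norm_num at hq
  have := hn.le_of_factorization_five_eq_two ((hpf 8 (by omega)).trans (by decide)) h2 h3 hq2
  omega

theorem factorization_eq_one (hn : HighlyComposite n) (hbig : 50400 < n) {pr q : ℕ}
    (hpr : pr.Prime) (hprn : pr ∣ n) (hmax : ∀ r : ℕ, r.Prime → r ∣ n → r ≤ pr)
    (hq : q.Prime) (hhalf : pr + 1 < 2 * q) (hle : q ≤ pr) : n.factorization q = 1 := by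
  have hpos := hq.factorization_pos_of_dvd hn.1.ne' (hn.dvd_of_le hpr hprn hq hle)
  obtain ⟨p, hp, hprp, hp2pr⟩ := Nat.exists_prime_lt_and_le_two_mul pr hpr.ne_zero
  have hpq : p < q ^ 2 := by
    rcases (show q = 2 ∨ 3 ≤ q by have := hq.two_le; omega) with rfl | hq3
    · have hp4 : p ≠ 4 := by rintro rfl; norm_num at hp
      norm_num
      omega
    · nlinarith
  have h2 := hn.factorization_le_two hq hp (fun h => (hmax p hp h).not_gt hprp) hpq
  have := hn.factorization_ne_two hbig hpr hmax hq hhalf hle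
  omega

theorem three_le_of_four_lt (hn : HighlyComposite n) (hbig : 4 < n) {pr : ℕ}
    (hmax : ∀ r : ℕ, r.Prime → r ∣ n → r ≤ pr) : 3 ≤ pr := by
  by_contra! h
  have h3 : ¬ 3 ∣ n := fun h3 => by have := hmax 3 Nat.prime_three h3; omega
  have hsub : n.primeFactors ⊆ {2} := fun r hr => by
    have := hmax r (Nat.prime_of_mem_primeFactors hr) (Nat.dvd_of_mem_primeFactors hr)
    have := (Nat.prime_of_mem_primeFactors hr).two_le
    simp only [Finset.mem_singleton]
    omega
  have h2 := hn.factorization_le_two Nat.prime_two Nat.prime_three h3 (by norm_num)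
  have hn2 : 2 ^ n.factorization 2 = n := by
    simpa using prod_pow_factorization_eq_self_of_subset hn.1.ne' hsub
  have : 2 ^ n.factorization 2 ≤ 2 ^ 2 := Nat.pow_le_pow_right (by norm_num) h2
  omega

end HighlyComposite

lemma card_le_factorization_two_d {n : ℕ} (hn : n ≠ 0) {s : Finset ℕ}
    (hs : ∀ p ∈ s, p.Prime ∧ Odd (n.factorization p)) : s.card ≤ (d n).factorization 2 := by
  have hsub : s ⊆ n.primeFactors := fun p hp => by
    rw [← Nat.support_factorization]
    exact Finsupp.mem_support_iff.2 (hs p hp).2.pos.ne'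
  rw [d, Nat.card_divisors hn, Nat.factorization_prod fun _ _ => Nat.succ_ne_zero _,
    Finsupp.finsetSum_apply, Finset.card_eq_sum_ones]
  refine (Finset.sum_le_sum fun p hp => ?_).trans (Finset.sum_le_sum_of_subset hsub)
  exact Nat.prime_two.factorization_pos_of_dvd (Nat.succ_ne_zero _)
    (even_iff_two_dvd.1 (hs p hp).2.add_one)

/-- For highly composite n > 50400 with largest prime factor p_r, the
exponent of 2 in d(n) is at least π(p_r+1) − π((p_r+1)/2). -/
theorem stmt_3 (n : ℕ) (hn : HighlyComposite n) (hbig : 50400 < n)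
    (pr : ℕ) (hpr : pr.Prime) (hprdvd : pr ∣ n)
    (hmax : ∀ q : ℕ, q.Prime → q ∣ n → q ≤ pr) :
    Nat.primeCounting (pr + 1) - Nat.primeCounting ((pr + 1) / 2) ≤
      (d n).factorization 2 := by
  have hpr3 := hn.three_le_of_four_lt (by omega) hmax
  have hsub : Nat.primesLE ((pr + 1) / 2) ⊆ Nat.primesLE (pr + 1) := fun r hr => by
    rw [Nat.mem_primesLE] at hr ⊢
    exact ⟨by omega, hr.2⟩
  rw [← Nat.primesLE_card_eq_primeCounting, ← Nat.primesLE_card_eq_primeCounting,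
    ← Finset.card_sdiff_of_subset hsub]
  refine card_le_factorization_two_d hn.1.ne' fun q hq => ?_
  simp only [Finset.mem_sdiff, Nat.mem_primesLE, not_and] at hq
  obtain ⟨⟨hq_le, hq⟩, hq_half⟩ := hq
  have hhalf : (pr + 1) / 2 < q := by
    by_contra! h
    exact hq_half h hq
  have hq_ne : q ≠ pr + 1 := by
    rintro rfl
    have := (hq.even_iff).1 ((hpr.odd_of_ne_two (by omega)).add_one)
    omega
  refine ⟨hq, ?_⟩
  rw [hn.factorization_eq_one hbig hpr hprdvd hmax hq (by omega) (by omega)]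
  exact odd_one
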